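/- Let φ : ℝ → ℝ be a C², 2π-periodic function with φ(t+π) = −φ(t) for all t, let α = 3/2, and fix ε ∈ ℝ, θ ∈ ℝ, λ ∈ ℂ. Suppose U, W : ℝ → ℂ are 2π-periodic C² functions such that the pair (u,w) = (U(t)e^{λt}, W(t)e^{λt}) satisfies the linearized system with parameter π−θ: ü + (α/(1+ε²))|φ(t)|^{α−1}u = (ε/(1+ε²))(V''(−φ(t)) + V''(φ(t))e^{−2i(π−θ)})w and ẅ + (αε²/(1+ε²))|φ(t)|^{α−1}w = (ε/(1+ε²))(V''(−φ(t)) + V''(φ(t))e^{2i(π−θ)})u. Then the pair (ũ,w̃) = (U(t+π)e^{λt}, e^{2iθ}W(t+π)e^{λt}) satisfies the same linearized system with parameter θ in place of π−θ. In particular, the characteristic exponents of the linearized problem at the uniform periodic oscillation (q = 0) for parameters θ and π−θ coincide. -/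

import Mathlib

open Real

/-- Second derivative of the Hertzian potential: `V''(x) = (3/2)(max(-x,0))^(1/2)`. -/
noncomputable def V'' (x : ℝ) : ℝ := (3/2) * (max (-x) 0) ^ ((1:ℝ)/2)

/-- The linearized system at the uniform periodic oscillation (`q = 0`) of the dimer
chain, with Bloch parameter `θ`, for the pair of complex-valued functions `(u, w)`;
here `α = 3/2`, so `α - 1 = 1/2`. -/
def LinSys (ε θ : ℝ) (φ : ℝ → ℝ) (u w : ℝ → ℂ) : Prop :=
  (∀ t : ℝ, deriv (deriv u) t
      + ((((3:ℝ)/2) / (1 + ε ^ 2) * |φ t| ^ ((1:ℝ)/2) : ℝ) : ℂ) * u t =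
    ((ε / (1 + ε ^ 2) : ℝ) : ℂ)
      * ((V'' (-φ t) : ℂ) + (V'' (φ t) : ℂ) * Complex.exp (-2 * Complex.I * (θ:ℂ)))
      * w t) ∧
  (∀ t : ℝ, deriv (deriv w) t
      + ((((3:ℝ)/2) * ε ^ 2 / (1 + ε ^ 2) * |φ t| ^ ((1:ℝ)/2) : ℝ) : ℂ) * w t =
    ((ε / (1 + ε ^ 2) : ℝ) : ℂ)
      * ((V'' (-φ t) : ℂ) + (V'' (φ t) : ℂ) * Complex.exp (2 * Complex.I * (θ:ℂ)))
      * u t)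

/-!
The half-period shift `t ↦ t + π` turns `φ` into `-φ` and so swaps `V''(φ)` and `V''(-φ)`.
For a solution with Bloch parameter `θ'`, pulling `e^{∓2iθ'}` out of the swapped coupling
coefficients and rescaling `w` by `e^{-2iθ'}` gives a solution with Bloch parameter `-θ'`.
The coefficients depend on the Bloch parameter only through `e^{±2iθ}`, so `-(π - θ)` may be
replaced by `θ`, and the factor `e^{λπ}` produced by shifting a Floquet solution is a constant,
absorbed by linearity.
-/

open Complex

section Deriv

variable {𝕜 𝕜' : Type*} [NontriviallyNormedField 𝕜] [NontriviallyNormedField 𝕜']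
  [NormedAlgebra 𝕜 𝕜']

theorem deriv_deriv_comp_add_const {F : Type*} [NormedAddCommGroup F] [NormedSpace 𝕜 F]
    (f : 𝕜 → F) (a : 𝕜) :
    deriv (deriv fun x => f (x + a)) = fun x => deriv (deriv f) (x + a) := by
  have hshift (g : 𝕜 → F) : (deriv fun x => g (x + a)) = fun x => deriv g (x + a) :=
    funext fun x => deriv_comp_add_const g a x
  rw [hshift, hshift]

theorem deriv_deriv_const_mul (c : 𝕜') (f : 𝕜 → 𝕜') :
    deriv (deriv fun x => c * f x) = fun x => c * deriv (deriv f) x := by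
  rw [deriv_const_mul_field', deriv_const_mul_field']

end Deriv

theorem cexp_two_mul_I_mul_add_pi (θ : ℝ) :
    cexp (2 * I * ((θ + π : ℝ) : ℂ)) = cexp (2 * I * θ) := by
  rw [← exp_periodic (2 * I * θ)]
  push_cast
  ring_nf

theorem cexp_neg_two_mul_I_mul_add_pi (θ : ℝ) :
    cexp (-2 * I * ((θ + π : ℝ) : ℂ)) = cexp (-2 * I * θ) := by
  rw [← exp_periodic.sub_eq (-2 * I * θ)]
  push_cast
  ring_nf

namespace LinSys

variable {ε θ : ℝ} {φ : ℝ → ℝ} {u w : ℝ → ℂ}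

theorem add_pi_iff : LinSys ε (θ + π) φ u w ↔ LinSys ε θ φ u w := by
  rw [LinSys, LinSys, cexp_two_mul_I_mul_add_pi, cexp_neg_two_mul_I_mul_add_pi]

theorem const_mul (c : ℂ) (h : LinSys ε θ φ u w) :
    LinSys ε θ φ (fun t => c * u t) (fun t => c * w t) := by
  refine ⟨fun t => ?_, fun t => ?_⟩
  · rw [deriv_deriv_const_mul]
    linear_combination c * h.1 t
  · rw [deriv_deriv_const_mul]
    linear_combination c * h.2 t

theorem comp_add_antiperiod {a : ℝ} (ha : Function.Antiperiodic φ a) (h : LinSys ε θ φ u w) :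
    LinSys ε (-θ) φ (fun t => u (t + a)) (fun t => cexp (-2 * I * θ) * w (t + a)) := by
  have hexp : cexp (-2 * I * θ) * cexp (2 * I * θ) = 1 := by
    rw [← Complex.exp_add, neg_mul, neg_mul, neg_add_cancel, Complex.exp_zero]
  have hneg : cexp (-2 * I * ((-θ : ℝ) : ℂ)) = cexp (2 * I * θ) := by push_cast; ring_nf
  have hneg' : cexp (2 * I * ((-θ : ℝ) : ℂ)) = cexp (-2 * I * θ) := by push_cast; ring_nf
  refine ⟨fun t => ?_, fun t => ?_⟩
  · have hu := h.1 (t + a)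
    rw [ha t, abs_neg, neg_neg] at hu
    rw [deriv_deriv_comp_add_const, hneg]
    linear_combination hu - ((ε / (1 + ε ^ 2) : ℝ) : ℂ) * V'' (φ t) * w (t + a) * hexp
  · have hw := h.2 (t + a)
    rw [ha t, abs_neg, neg_neg] at hw
    rw [deriv_deriv_const_mul (cexp (-2 * I * θ)) (fun t => w (t + a)),
      deriv_deriv_comp_add_const, hneg']
    linear_combination cexp (-2 * I * θ) * hw
      + ((ε / (1 + ε ^ 2) : ℝ) : ℂ) * V'' (-φ t) * u (t + a) * hexp

end LinSys

theorem hidden_symmetry_q_zero_general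
    (φ : ℝ → ℝ)
    (hanti : ∀ t, φ (t + π) = -φ t)
    (ε θ : ℝ) (lam : ℂ) (U W : ℝ → ℂ)
    (h : LinSys ε (π - θ) φ
      (fun t => U t * Complex.exp (lam * (t:ℂ)))
      (fun t => W t * Complex.exp (lam * (t:ℂ)))) :
    LinSys ε θ φ
      (fun t => U (t + π) * Complex.exp (lam * (t:ℂ)))
      (fun t => Complex.exp (2 * Complex.I * (θ:ℂ)) * W (t + π)
        * Complex.exp (lam * (t:ℂ))) := by
  rw [← neg_add_eq_sub, LinSys.add_pi_iff] at h
  have key := (h.comp_add_antiperiod hanti).const_mul (cexp (-(lam * π)))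
  rw [neg_neg] at key
  have hexp_shift (t : ℝ) :
      cexp (lam * t) = cexp (-(lam * π)) * cexp (lam * ((t + π : ℝ) : ℂ)) := by
    rw [← Complex.exp_add]
    push_cast
    ring_nf
  convert key using 2 with t t <;> rw [hexp_shift t] <;> push_cast <;> ring_nf

/-- Hidden symmetry of the linearized problem at the uniform oscillation (`q = 0`):
a Floquet solution for the Bloch parameter `π - θ` is mapped to a Floquet solution
(with the same exponent `λ`) for the Bloch parameter `θ`. -/
theorem hidden_symmetry_q_zero
    (φ : ℝ → ℝ) (hφ : ContDiff ℝ 2 φ)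
    (hφper : Function.Periodic φ (2 * π))
    (hanti : ∀ t, φ (t + π) = -φ t)
    (ε θ : ℝ) (lam : ℂ) (U W : ℝ → ℂ)
    (hU : ContDiff ℝ 2 U) (hW : ContDiff ℝ 2 W)
    (hUper : Function.Periodic U (2 * π)) (hWper : Function.Periodic W (2 * π))
    (h : LinSys ε (π - θ) φ
      (fun t => U t * Complex.exp (lam * (t:ℂ)))
      (fun t => W t * Complex.exp (lam * (t:ℂ)))) :
    LinSys ε θ φ
      (fun t => U (t + π) * Complex.exp (lam * (t:ℂ)))
      (fun t => Complex.exp (2 * Complex.I * (θ:ℂ)) * W (t + π)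
        * Complex.exp (lam * (t:ℂ))) :=
  hidden_symmetry_q_zero_general φ hanti ε θ lam U W h
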